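/- Let g : [0,∞) → [0,∞) be continuously differentiable with g(0) = 0, g'(0) = 0, g'(∞) = 0, and let a be continuous T-periodic with ∫₀ᵀ a < 0. Then there exists λ* > 0 such that for every 0 < λ < λ*, the equation u'' + c u' + λ a(t) g(u) = 0 admits no positive C^2 T-periodic solution. -/

import Mathlib

/-!
If `u` is a positive `T`-periodic solution, then `y = u' / g(u)` is `T`-periodic, vanishes at a
critical point `t₀` of `u`, has zero integral over a period (it is the derivative of `G ∘ u` with
`G' = 1 / g`), and solves the Riccati equation `y' = -c y - g'(u) y² - λ a`. Integrating this
equation over a period gives `∫ g'(u) y² = -λ ∫ a`, which is of exact order `λ`. On the other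
hand, the variation-of-constants formula for `y' + c y = -g'(u) y² - λ a` together with a
continuity argument started at `t₀` shows `|y| ≤ λ M` on a period, for a fixed `M` and all small
`λ`, so the left-hand side is `O(λ²)`: a contradiction.
-/

open Set Filter MeasureTheory intervalIntegral Topology

def IsPosPeriodicSolution (T c lam : ℝ) (a g u : ℝ → ℝ) : Prop :=
  ContDiff ℝ 2 u ∧ Function.Periodic u T ∧ (∀ t, 0 < u t) ∧
    ∀ t, deriv (deriv u) t + c * deriv u t + lam * a t * g (u t) = 0

theorem Function.Periodic.deriv {𝕜 F : Type*} [NontriviallyNormedField 𝕜] [NormedAddCommGroup F]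
    [NormedSpace 𝕜 F] {f : 𝕜 → F} {T : 𝕜} (h : Function.Periodic f T) :
    Function.Periodic (_root_.deriv f) T := fun t => by
  rw [← deriv_comp_add_const, show (fun x => f (x + T)) = f from funext h]

theorem Function.Periodic.exists_deriv_eq_zero {f : ℝ → ℝ} {T : ℝ} (h : Function.Periodic f T)
    (hT : 0 < T) (hf : Continuous f) : ∃ t, _root_.deriv f t = 0 := by
  obtain ⟨t, -, ht⟩ := _root_.exists_deriv_eq_zero hT hf.continuousOn (by simpa using (h 0).symm)
  exact ⟨t, ht⟩

theorem exists_pos_abs_le_of_tendsto_atTop {φ : ℝ → ℝ} {l : ℝ} (hφ : Continuous φ)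
    (hl : Tendsto φ atTop (𝓝 l)) (x₀ : ℝ) : ∃ D > 0, ∀ s, x₀ ≤ s → |φ s| ≤ D := by
  obtain ⟨R, hR⟩ := Metric.tendsto_atTop.mp hl 1 one_pos
  obtain ⟨C, hC⟩ := isCompact_Icc.exists_bound_of_continuousOn (hφ.continuousOn (s := Icc x₀ R))
  refine ⟨max C (|l| + 1), by positivity, fun s hs => ?_⟩
  rcases le_total s R with hsR | hsR
  · exact (hC s ⟨hs, hsR⟩).trans (le_max_left _ _)
  · have hdist : |φ s - l| < 1 := hR s hsR
    calc |φ s| ≤ |l| + |φ s - l| := by simpa using abs_add_le l (φ s - l)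
      _ ≤ max C (|l| + 1) := by linarith [le_max_right C (|l| + 1)]

theorem abs_mul_sq_le {p y D K : ℝ} (hp : |p| ≤ D) (hy : |y| ≤ K) : |p * y ^ 2| ≤ D * K ^ 2 := by
  rw [abs_mul, abs_pow]
  exact mul_le_mul hp (pow_le_pow_left₀ (abs_nonneg y) hy 2) (by positivity)
    ((abs_nonneg p).trans hp)

theorem ContinuousOn.forall_lt_of_bootstrap {f : ℝ → ℝ} {a b K : ℝ} (hf : ContinuousOn f (Icc a b))
    (ha : f a < K) (hstep : ∀ τ ∈ Icc a b, (∀ s ∈ Icc a τ, f s ≤ K) → f τ < K) :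
    ∀ t ∈ Icc a b, f t < K := by
  by_contra! hbad
  obtain ⟨t, ht, hKt⟩ := hbad
  have hS : IsCompact (Icc a b ∩ f ⁻¹' Ici K) :=
    isCompact_Icc.of_isClosed_subset (hf.preimage_isClosed_of_isClosed isClosed_Icc isClosed_Ici)
      inter_subset_left
  obtain ⟨τ, ⟨hτ, hKτ⟩, hτmin⟩ := hS.exists_isLeast ⟨t, ht, hKt⟩
  have hbefore : ∀ s ∈ Ico a τ, f s ≤ K := fun s hs => by
    by_contra! hs'
    exact hs.2.not_ge (hτmin ⟨⟨hs.1, hs.2.le.trans hτ.2⟩, hs'.le⟩)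
  have haτ : a ≠ τ := by rintro rfl; exact (lt_of_lt_of_le ha hKτ).false
  have hupto : ∀ s ∈ Icc a τ, f s ≤ K := by
    rw [← closure_Ico haτ]
    exact le_on_closure hbefore
      (by rw [closure_Ico haτ]; exact hf.mono (Icc_subset_Icc le_rfl hτ.2)) continuousOn_const
  exact (hstep τ hτ hupto).not_ge hKτ

/-- Variation of constants: `y τ = ∫ s in t₀..τ, exp (c (s - τ)) F s`. -/
theorem abs_le_exp_mul_integral_abs {y F : ℝ → ℝ} {c t₀ τ : ℝ}
    (hy : ∀ s, HasDerivAt y (-(c * y s) + F s) s) (hF : Continuous F) (hy₀ : y t₀ = 0)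
    (hτ : t₀ ≤ τ) : |y τ| ≤ Real.exp (|c| * (τ - t₀)) * ∫ s in t₀..τ, |F s| := by
  have hz : ∀ s, HasDerivAt (fun r => Real.exp (c * (r - τ)) * y r)
      (Real.exp (c * (s - τ)) * F s) s := fun s => by
    have he : HasDerivAt (fun r => Real.exp (c * (r - τ))) (Real.exp (c * (s - τ)) * c) s := by
      simpa using (((hasDerivAt_id s).sub_const τ).const_mul c).exp
    exact (he.mul (hy s)).congr_deriv (by ring)
  have hcont : Continuous fun s => Real.exp (c * (s - τ)) * F s := by fun_prop
  have hformula : y τ = ∫ s in t₀..τ, Real.exp (c * (s - τ)) * F s := by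
    rw [integral_eq_sub_of_hasDerivAt (fun s _ => hz s) (hcont.intervalIntegrable _ _)]
    simp [hy₀]
  have hexp : ∀ s ∈ Icc t₀ τ, Real.exp (c * (s - τ)) ≤ Real.exp (|c| * (τ - t₀)) := fun s hs => by
    refine Real.exp_le_exp.mpr ?_
    calc c * (s - τ) ≤ |c| * |s - τ| := by rw [← abs_mul]; exact le_abs_self _
      _ ≤ |c| * (τ - t₀) := by
        gcongr
        rw [abs_of_nonpos (by linarith [hs.2])]
        linarith [hs.1]
  calc |y τ| ≤ ∫ s in t₀..τ, |Real.exp (c * (s - τ)) * F s| := by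
        rw [hformula]; exact abs_integral_le_integral_abs hτ
    _ ≤ ∫ s in t₀..τ, Real.exp (|c| * (τ - t₀)) * |F s| := by
        refine integral_mono_on hτ (hcont.abs.intervalIntegrable _ _)
          ((continuous_const.mul hF.abs).intervalIntegrable _ _) fun s hs => ?_
        rw [abs_mul, Real.abs_exp]
        exact mul_le_mul_of_nonneg_right (hexp s hs) (abs_nonneg _)
    _ = Real.exp (|c| * (τ - t₀)) * ∫ s in t₀..τ, |F s| := integral_const_mul _ _

theorem hasDerivAt_deriv_div_comp {u g a : ℝ → ℝ} {c lam t : ℝ} (hu : DifferentiableAt ℝ u t)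
    (hu' : DifferentiableAt ℝ (deriv u) t) (hg : DifferentiableAt ℝ g (u t)) (hgu : g (u t) ≠ 0)
    (hode : deriv (deriv u) t + c * deriv u t + lam * a t * g (u t) = 0) :
    HasDerivAt (fun s => deriv u s / g (u s))
      (-(c * (deriv u t / g (u t))) - deriv g (u t) * (deriv u t / g (u t)) ^ 2 - lam * a t) t := by
  refine (hu'.hasDerivAt.div (hg.hasDerivAt.comp t hu.hasDerivAt) hgu).congr_deriv ?_
  rw [Function.comp_apply, show deriv (deriv u) t = -(c * deriv u t) - lam * a t * g (u t) by
    linarith]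
  field_simp
  ring

theorem integral_deriv_div_comp_eq_zero {u g : ℝ → ℝ} {t₀ t₁ : ℝ} (hu : ContDiff ℝ 1 u)
    (hg : Continuous g) (hgu : ∀ t, g (u t) ≠ 0) (h : u t₁ = u t₀) :
    ∫ t in t₀..t₁, deriv u t / g (u t) = 0 := by
  have hsubst := integral_comp_mul_deriv' (a := t₀) (b := t₁) (g := fun x => (g x)⁻¹)
    (fun x _ => (hu.differentiable one_ne_zero x).hasDerivAt)
    (hu.continuous_deriv le_rfl).continuousOn
    (hg.continuousOn.inv₀ (by rintro _ ⟨t, -, rfl⟩; exact hgu t))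
  simpa [h, div_eq_inv_mul] using hsubst

section Riccati

variable {y p a : ℝ → ℝ} {c lam : ℝ}

theorem integral_mul_sq_eq_of_riccati
    (hy : ∀ t, HasDerivAt y (-(c * y t) - p t * y t ^ 2 - lam * a t) t) (hp : Continuous p)
    (ha : Continuous a) {t₀ t₁ : ℝ} (hy₁ : y t₁ = y t₀) (hmean : ∫ t in t₀..t₁, y t = 0) :
    ∫ t in t₀..t₁, p t * y t ^ 2 = -(lam * ∫ t in t₀..t₁, a t) := by
  have hyc : Continuous y := continuous_iff_continuousAt.mpr fun t => (hy t).continuousAt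
  have hftc := integral_eq_sub_of_hasDerivAt (fun t _ => hy t)
    (Continuous.intervalIntegrable (by fun_prop) t₀ t₁)
  rw [hy₁, sub_self, integral_sub (Continuous.intervalIntegrable (by fun_prop) _ _)
      (Continuous.intervalIntegrable (by fun_prop) _ _),
    integral_sub (Continuous.intervalIntegrable (by fun_prop) _ _)
      (Continuous.intervalIntegrable (by fun_prop) _ _),
    intervalIntegral.integral_neg, intervalIntegral.integral_const_mul,
    intervalIntegral.integral_const_mul, hmean] at hftc
  linarith

theorem abs_le_of_riccati
    (hy : ∀ t, HasDerivAt y (-(c * y t) - p t * y t ^ 2 - lam * a t) t) (hp : Continuous p)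
    (ha : Continuous a) {D M T t₀ : ℝ} (hy₀ : y t₀ = 0) (hpD : ∀ t, |p t| ≤ D) (hlam : 0 < lam)
    (hM : lam * D * (T * M ^ 2 * Real.exp (|c| * T))
      < M - Real.exp (|c| * T) * ∫ t in t₀..t₀ + T, |a t|) :
    ∀ t ∈ Icc t₀ (t₀ + T), |y t| ≤ lam * M := by
  intro t ht
  have hT : 0 ≤ T := by linarith [ht.1.trans ht.2]
  set E := Real.exp (|c| * T)
  set Ia := ∫ t in t₀..t₀ + T, |a t|
  have hD : 0 ≤ D := (abs_nonneg _).trans (hpD 0)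
  have hIa : 0 ≤ Ia := integral_nonneg (by linarith) fun _ _ => abs_nonneg _
  have hM0 : 0 < M := by
    have : 0 ≤ lam * D * (T * M ^ 2 * E) := by positivity
    nlinarith [Real.exp_pos (|c| * T)]
  have hyc : Continuous y := continuous_iff_continuousAt.mpr fun t => (hy t).continuousAt
  have hF : Continuous fun s => -(p s * y s ^ 2) - lam * a s := by fun_prop
  refine (ContinuousOn.forall_lt_of_bootstrap (f := fun s => |y s|) hyc.abs.continuousOn
    (by simpa [hy₀] using mul_pos hlam hM0) (fun τ hτ hprefix => ?_) t ht).le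
  have hFbound : ∀ s ∈ Icc t₀ τ, |-(p s * y s ^ 2) - lam * a s| ≤ D * (lam * M) ^ 2 + lam * |a s| :=
    fun s hs => by
      calc |-(p s * y s ^ 2) - lam * a s| ≤ |p s * y s ^ 2| + |lam * a s| := by
            rw [← abs_neg (p s * y s ^ 2)]; exact abs_sub _ _
        _ ≤ D * (lam * M) ^ 2 + lam * |a s| := by
            rw [abs_mul lam, abs_of_pos hlam]
            exact add_le_add (abs_mul_sq_le (hpD s) (hprefix s hs)) le_rfl
  have hint : ∫ s in t₀..τ, |-(p s * y s ^ 2) - lam * a s| ≤ T * (D * (lam * M) ^ 2) + lam * Ia :=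
    calc ∫ s in t₀..τ, |-(p s * y s ^ 2) - lam * a s|
        ≤ ∫ s in t₀..τ, (D * (lam * M) ^ 2 + lam * |a s|) :=
          integral_mono_on hτ.1 (hF.abs.intervalIntegrable _ _)
            (Continuous.intervalIntegrable (by fun_prop) _ _) hFbound
      _ = (τ - t₀) * (D * (lam * M) ^ 2) + lam * ∫ s in t₀..τ, |a s| := by
          rw [integral_add intervalIntegrable_const
            (Continuous.intervalIntegrable (by fun_prop) _ _), intervalIntegral.integral_const,
            intervalIntegral.integral_const_mul, smul_eq_mul]
      _ ≤ T * (D * (lam * M) ^ 2) + lam * Ia := by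
          have hsub : ∫ s in t₀..τ, |a s| ≤ Ia :=
            integral_mono_interval le_rfl hτ.1 hτ.2 (Eventually.of_forall fun _ => abs_nonneg _)
              (ha.abs.intervalIntegrable _ _)
          have : τ - t₀ ≤ T := by linarith [hτ.2]
          gcongr
  calc |y τ| ≤ Real.exp (|c| * (τ - t₀)) * ∫ s in t₀..τ, |-(p s * y s ^ 2) - lam * a s| :=
        abs_le_exp_mul_integral_abs (fun s => (hy s).congr_deriv (by ring)) hF hy₀ hτ.1
    _ ≤ E * (T * (D * (lam * M) ^ 2) + lam * Ia) := by
        gcongr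
        · exact integral_nonneg hτ.1 fun _ _ => abs_nonneg _
        · exact Real.exp_le_exp.mpr (by gcongr; linarith [hτ.2])
    _ = lam * (lam * D * (T * M ^ 2 * E) + E * Ia) := by ring
    _ < lam * M := by gcongr; linarith

end Riccati

theorem not_isPosPeriodicSolution {T c lam D M : ℝ} {a g u : ℝ → ℝ} (hT : 0 < T)
    (hg : ContDiff ℝ 1 g) (hgpos : ∀ s > 0, 0 < g s) (hD : ∀ s, 0 ≤ s → |deriv g s| ≤ D)
    (ha : Continuous a) (haP : Function.Periodic a T) (hlam : 0 < lam)
    (hM : lam * D * (T * M ^ 2 * Real.exp (|c| * T))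
      < M - Real.exp (|c| * T) * ∫ t in (0 : ℝ)..T, |a t|)
    (hneg : lam * D * (T * M ^ 2) < -∫ t in (0 : ℝ)..T, a t) :
    ¬ IsPosPeriodicSolution T c lam a g u := by
  rintro ⟨hu, huP, hupos, hode⟩
  have hu₁ : ContDiff ℝ 1 u := hu.of_le one_le_two
  have hu' : ContDiff ℝ 1 (deriv u) := hu.deriv' (n := 1)
  have hgu : ∀ t, g (u t) ≠ 0 := fun t => (hgpos _ (hupos t)).ne'
  obtain ⟨t₀, ht₀⟩ := huP.exists_deriv_eq_zero hT hu₁.continuous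
  set y := fun t => deriv u t / g (u t)
  set p := fun t => deriv g (u t)
  have hy : ∀ t, HasDerivAt y (-(c * y t) - p t * y t ^ 2 - lam * a t) t := fun t =>
    hasDerivAt_deriv_div_comp (hu₁.differentiable one_ne_zero t)
      (hu'.differentiable one_ne_zero t) (hg.differentiable one_ne_zero _) (hgu t) (hode t)
  have hp : Continuous p := (hg.continuous_deriv le_rfl).comp hu₁.continuous
  have hpD : ∀ t, |p t| ≤ D := fun t => hD _ (hupos t).le
  have hbound : ∀ t ∈ Icc t₀ (t₀ + T), |y t| ≤ lam * M := by
    refine abs_le_of_riccati hy hp ha (by simp [y, ht₀]) hpD hlam ?_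
    have habsP : Function.Periodic (fun t => |a t|) T := haP.comp (fun x => |x|)
    rwa [habsP.intervalIntegral_add_eq t₀ 0, zero_add]
  have hidentity := integral_mul_sq_eq_of_riccati hy hp ha (by simp [y, huP.deriv t₀, huP t₀])
    (integral_deriv_div_comp_eq_zero hu₁ hg.continuous hgu (huP t₀))
  rw [haP.intervalIntegral_add_eq t₀ 0, zero_add] at hidentity
  have hsmall : ∫ t in t₀..t₀ + T, p t * y t ^ 2 ≤ ∫ _ in t₀..t₀ + T, D * (lam * M) ^ 2 :=
    integral_mono_on (by linarith) (Continuous.intervalIntegrable (by fun_prop) _ _)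
      intervalIntegrable_const fun t ht =>
        (le_abs_self _).trans (abs_mul_sq_le (hpD t) (hbound t ht))
  rw [hidentity, intervalIntegral.integral_const, smul_eq_mul, add_sub_cancel_left] at hsmall
  nlinarith

theorem stmt13_general (T c : ℝ) (hT : 0 < T)
    (g : ℝ → ℝ) (hg : ContDiff ℝ 1 g)
    (hgpos : ∀ s > (0:ℝ), 0 < g s)
    (hg'inf : Filter.Tendsto (deriv g) Filter.atTop (nhds 0))
    (a : ℝ → ℝ) (ha : Continuous a) (haP : Function.Periodic a T)
    (haneg : (∫ t in (0:ℝ)..T, a t) < 0) :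
    ∃ lam0 > (0:ℝ), ∀ lam : ℝ, 0 < lam → lam < lam0 →
      ¬ ∃ u : ℝ → ℝ, ContDiff ℝ 2 u ∧ Function.Periodic u T ∧ (∀ t, 0 < u t) ∧
        ∀ t, deriv (deriv u) t + c * deriv u t + lam * a t * g (u t) = 0 := by
  obtain ⟨D, hD, hDbound⟩ :=
    exists_pos_abs_le_of_tendsto_atTop (hg.continuous_deriv le_rfl) hg'inf 0
  set E := Real.exp (|c| * T)
  set Ia := ∫ t in (0:ℝ)..T, |a t|
  have hIa : 0 ≤ Ia := integral_nonneg hT.le fun _ _ => abs_nonneg _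
  -- any `M > E * Ia` would do
  set M := E * Ia + 1
  have hM : 0 < M := by positivity
  refine ⟨min (1 / (D * (T * M ^ 2 * E))) ((-∫ t in (0:ℝ)..T, a t) / (D * (T * M ^ 2))),
    lt_min (by positivity) (div_pos (neg_pos.mpr haneg) (by positivity)), ?_⟩
  rintro lam hlam hlt ⟨u, hu⟩
  refine not_isPosPeriodicSolution (M := M) hT hg hgpos hDbound ha haP hlam ?_ ?_ hu
  · have h := (lt_min_iff.mp hlt).1
    rw [lt_div_iff₀ (by positivity)] at h
    linarith
  · have h := (lt_min_iff.mp hlt).2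
    rwa [lt_div_iff₀ (by positivity), ← mul_assoc] at h

theorem stmt13 (T c : ℝ) (hT : 0 < T)
    (g : ℝ → ℝ) (hg : ContDiff ℝ 1 g) (hg0 : g 0 = 0)
    (hgnn : ∀ s, 0 ≤ s → 0 ≤ g s) (hgpos : ∀ s > (0:ℝ), 0 < g s)
    (hg'0 : deriv g 0 = 0)
    (hg'inf : Filter.Tendsto (deriv g) Filter.atTop (nhds 0))
    (a : ℝ → ℝ) (ha : Continuous a) (haP : Function.Periodic a T)
    (haneg : (∫ t in (0:ℝ)..T, a t) < 0) :
    ∃ lam0 > (0:ℝ), ∀ lam : ℝ, 0 < lam → lam < lam0 →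
      ¬ ∃ u : ℝ → ℝ, ContDiff ℝ 2 u ∧ Function.Periodic u T ∧ (∀ t, 0 < u t) ∧
        ∀ t, deriv (deriv u) t + c * deriv u t + lam * a t * g (u t) = 0 :=
  stmt13_general T c hT g hg hgpos hg'inf a ha haP haneg
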